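/- Suppose P_i, P_j : ℝ² → [0,1] each attain their supremum at unique points x_i* and x_j* respectively, and the flattened distributions satisfy Q_i(θ) = Q_{j→i}(θ) for all θ, where Q_i(θ) = sup_{x ∈ l_i(θ)} P_i(x) and Q_{j→i}(θ) = sup_{x ∈ l_j(θ)} P_j(x) with l_i(θ), l_j(θ) the corresponding epipolar lines indexed by the epipolar-plane angle θ. Then the unique maximizers of Q_i and Q_{j→i} are attained at a common angle θ*, and x_i* ∈ l_i(θ*) and x_j* ∈ l_j(θ*); i.e., the detected keypoints lie on corresponding epipolar lines, so x̃_j*ᵀ F x̃_i* = 0. -/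
import Mathlib


open Matrix

/-- Homogeneous lift of a planar point. -/
def hlift (x : Fin 2 → ℝ) : Fin 3 → ℝ := ![x 0, x 1, 1]

/-- Suppose `P_i, P_j` attain their suprema at unique points `x_i*`, `x_j*`, the pencils of
corresponding epipolar lines `l_i(θ)`, `l_j(θ)` (given by line vectors `lvi θ`, `lvj θ`,
covering each image plane) satisfy the transfer relation `x ∈ l_i(θ) → F x̃ ∝ l_j(θ)`, the
flattened distributions `Q_i(θ) = sup_{x ∈ l_i(θ)} P_i(x)` and
`Q_{j→i}(θ) = sup_{x ∈ l_j(θ)} P_j(x)` agree, and `Q_i` has a unique maximizing angle.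
Then the maximum is attained at a common angle `θ*` with `x_i* ∈ l_i(θ*)`,
`x_j* ∈ l_j(θ*)`, and hence `x̃_j*ᵀ F x̃_i* = 0`. -/
theorem stmt6 (F : Matrix (Fin 3) (Fin 3) ℝ)
    (Pi Pj : (Fin 2 → ℝ) → ℝ)
    (hPi : ∀ x, 0 ≤ Pi x ∧ Pi x ≤ 1) (hPj : ∀ x, 0 ≤ Pj x ∧ Pj x ≤ 1)
    (lvi lvj : ℝ → (Fin 3 → ℝ))
    (Qi Qji : ℝ → ℝ)
    (hQi : ∀ θ, Qi θ = sSup (Pi '' {x | hlift x ⬝ᵥ lvi θ = 0}))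
    (hQji : ∀ θ, Qji θ = sSup (Pj '' {x | hlift x ⬝ᵥ lvj θ = 0}))
    (hcov_i : ∀ x : Fin 2 → ℝ, ∃ θ, hlift x ⬝ᵥ lvi θ = 0)
    (hcov_j : ∀ x : Fin 2 → ℝ, ∃ θ, hlift x ⬝ᵥ lvj θ = 0)
    (xi xj : Fin 2 → ℝ)
    (hxi_max : ∀ x, Pi x ≤ Pi xi) (hxi_uniq : ∀ x, Pi x = Pi xi → x = xi)
    (hxj_max : ∀ x, Pj x ≤ Pj xj) (hxj_uniq : ∀ x, Pj x = Pj xj → x = xj)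
    (hcorr : ∀ θ (x : Fin 2 → ℝ), hlift x ⬝ᵥ lvi θ = 0 →
      ∃ c : ℝ, c ≠ 0 ∧ F.mulVec (hlift x) = c • lvj θ)
    (heq : ∀ θ, Qi θ = Qji θ)
    (huniq : ∃! θ, ∀ θ', Qi θ' ≤ Qi θ) :
    ∃ θ, (∀ θ', Qi θ' ≤ Qi θ) ∧ (∀ θ', Qji θ' ≤ Qji θ) ∧
      hlift xi ⬝ᵥ lvi θ = 0 ∧ hlift xj ⬝ᵥ lvj θ = 0 ∧
      hlift xj ⬝ᵥ F.mulVec (hlift xi) = 0 := by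

  -- bounds
  have hQi_le : ∀ θ, Qi θ ≤ Pi xi := by
    intro θ
    rw [hQi]
    apply Real.sSup_le
    · rintro y ⟨x, -, rfl⟩; exact hxi_max x
    · exact (hPi xi).1
  have hQji_le : ∀ θ, Qji θ ≤ Pj xj := by
    intro θ
    rw [hQji]
    apply Real.sSup_le
    · rintro y ⟨x, -, rfl⟩; exact hxj_max x
    · exact (hPj xj).1
  obtain ⟨θi, hθi⟩ := hcov_i xi
  obtain ⟨θj, hθj⟩ := hcov_j xj
  have hQiθi : Qi θi = Pi xi := by
    refine le_antisymm (hQi_le θi) ?_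
    rw [hQi]
    exact le_csSup ⟨Pi xi, by rintro y ⟨x, -, rfl⟩; exact hxi_max x⟩ ⟨xi, hθi, rfl⟩
  have hQjiθj : Qji θj = Pj xj := by
    refine le_antisymm (hQji_le θj) ?_
    rw [hQji]
    exact le_csSup ⟨Pj xj, by rintro y ⟨x, -, rfl⟩; exact hxj_max x⟩ ⟨xj, hθj, rfl⟩
  have hmaxi : ∀ θ', Qi θ' ≤ Qi θi := fun θ' => hQiθi ▸ hQi_le θ'
  have hmaxj : ∀ θ', Qi θ' ≤ Qi θj := fun θ' => by
    rw [heq θj, hQjiθj]; rw [heq θ']; exact hQji_le θ'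
  obtain ⟨θs, -, hu⟩ := huniq
  have e1 : θi = θs := hu θi hmaxi
  have e2 : θj = θs := hu θj hmaxj
  subst e1; rw [e2] at hθj hQjiθj
  refine ⟨θi, hmaxi, fun θ' => by rw [← heq θ', ← heq θi]; exact hmaxi θ', hθi, hθj, ?_⟩
  obtain ⟨c, -, hc⟩ := hcorr θi xi hθi
  rw [hc, dotProduct_smul, hθj, smul_zero]
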